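/- arXiv:2405.04301 — 3 statements merged into one kernel-verified Lean document; each statement's English description precedes it below -/
import Mathlib

section
/- Let p, q be real numbers with p ≥ -1 and q ≤ 1, at least one of these two inequalities being strict, and let γ > 0. Then every smooth positive 2π-periodic function φ : ℝ → ℝ satisfying φ^{-p} ( φ'²/(2φ) + (φ + φ^{-1})/2 )^{q-1} ( φ'' - φ'²/(2φ) + (φ - φ^{-1})/2 ) = γ on ℝ is constant: φ(θ) ≡ c, where c > 0 satisfies c^{-p}((c + c^{-1})/2)^{q-1}((c - c^{-1})/2) = γ. -/
/-!
Write `ψ = φ'` and `W = ψ²/(2φ) + (φ + φ⁻¹)/2`. The equation says `φ'' = F + W - φ` with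
`F = γ φ^p W^(1-q) > 0`, and a direct computation gives `W' = ψ F / φ`. Differentiating once more,
`ψ` solves the linear equation `ψ'' + ψ = g ψ` with `g = (F / φ) (1 + p + (1 - q) F / W)`, and the
hypotheses on `p`, `q` make `g` positive. Multiplying by `ψ` and integrating by parts over a period
gives `∫ g ψ² = ∫ ψ² - ∫ ψ'²`, which is `≤ 0` by Wirtinger's inequality since `ψ` has mean zero.
Hence `ψ ≡ 0`, i.e. `φ` is constant.
-/

open Real

/-- A solution to the isotropic horospherical `q`-weighted `p`-Minkowski problem in the
hyperbolic plane: a smooth positive `2π`-periodic function `φ : ℝ → ℝ` satisfying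
`φ^{-p} (φ'²/(2φ) + (φ + φ⁻¹)/2)^{q-1} (φ'' - φ'²/(2φ) + (φ - φ⁻¹)/2) = γ`. -/
def IsSolutionQ (p q γ : ℝ) (φ : ℝ → ℝ) : Prop :=
  ContDiff ℝ (⊤ : ℕ∞) φ ∧ (∀ θ, 0 < φ θ) ∧ (∀ θ, φ (θ + 2 * π) = φ θ) ∧
  ∀ θ, φ θ ^ (-p) *
    ((deriv φ θ) ^ 2 / (2 * φ θ) + (φ θ + (φ θ)⁻¹) / 2) ^ (q - 1) *
    (deriv (deriv φ) θ - (deriv φ θ) ^ 2 / (2 * φ θ) + (φ θ - (φ θ)⁻¹) / 2) = γ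

open MeasureTheory Set Function

theorem ContinuousOn.memLp_restrict_Ioc {E : Type*} [NormedAddCommGroup E] {a b : ℝ} {f : ℝ → E}
    (hf : ContinuousOn f (Icc a b)) (p : ENNReal) : MemLp f p (volume.restrict (Ioc a b)) := by
  obtain ⟨C, hC⟩ := isCompact_Icc.exists_bound_of_continuousOn hf
  refine MemLp.of_bound ((hf.mono Ioc_subset_Icc_self).aestronglyMeasurable measurableSet_Ioc) C ?_
  exact ae_restrict_of_forall_mem measurableSet_Ioc fun x hx => hC x (Ioc_subset_Icc_self hx)

/-- Wirtinger's inequality. By Parseval it reduces to `c₀(f) = 0` and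
`cₙ(f) = (b - a) / (2π i n) · cₙ(f')` for `n ≠ 0`. -/
theorem integral_sq_le_of_hasDerivAt {a b : ℝ} (hab : a < b) {f f' : ℝ → ℝ}
    (hf : ∀ x ∈ Icc a b, HasDerivAt f (f' x) x) (hf' : ContinuousOn f' (Icc a b))
    (hfab : f a = f b) (hmean : ∫ x in a..b, f x = 0) :
    ∫ x in a..b, f x ^ 2 ≤ ((b - a) / (2 * π)) ^ 2 * ∫ x in a..b, f' x ^ 2 := by
  set F : ℝ → ℂ := fun x => f x
  set F' : ℝ → ℂ := fun x => f' x
  have hF'c : ContinuousOn F' (Icc a b) := Complex.continuous_ofReal.comp_continuousOn hf'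
  have hFc : ContinuousOn F (Icc a b) :=
    Complex.continuous_ofReal.comp_continuousOn fun x hx => (hf x hx).continuousAt.continuousWithinAt
  have hcoeff : ∀ n, ‖fourierCoeffOn hab F n‖ ^ 2 ≤
      ((b - a) / (2 * π)) ^ 2 * ‖fourierCoeffOn hab F' n‖ ^ 2 := by
    intro n
    rcases eq_or_ne n 0 with rfl | hn
    · have : fourierCoeffOn hab F 0 = 0 := by
        simp [fourierCoeffOn_eq_integral, F, intervalIntegral.integral_ofReal, hmean]
      rw [this, norm_zero, zero_pow two_ne_zero]
      positivity
    · have hFab : F b - F a = 0 := by simp [F, hfab]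
      rw [fourierCoeffOn_of_hasDerivAt hab hn
        (fun x hx => (hf x (by rwa [uIcc_of_le hab.le] at hx)).ofReal_comp)
        (hF'c.intervalIntegrable_of_Icc hab.le), hFab, mul_zero, zero_sub, norm_mul, mul_pow,
        norm_neg, norm_mul, mul_pow]
      have hn1 : (1 : ℝ) ≤ |(n : ℝ)| := by exact_mod_cast Int.one_le_abs hn
      simp only [one_div, norm_inv, norm_mul, Complex.norm_I, Complex.norm_real, Complex.norm_intCast,
        norm_neg, Real.norm_eq_abs, abs_of_pos pi_pos, Complex.norm_ofNat, ← Complex.ofReal_sub, sq_abs]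
      calc _ = ((b - a) / (2 * π)) ^ 2 * ‖fourierCoeffOn hab F' n‖ ^ 2 / |(n : ℝ)| ^ 2 := by
            field_simp
            rfl
        _ ≤ _ := div_le_self (by positivity) (one_le_pow₀ hn1)
  have hsum := hasSum_le hcoeff (hasSum_sq_fourierCoeffOn hab (hFc.memLp_restrict_Ioc 2))
    ((hasSum_sq_fourierCoeffOn hab (hF'c.memLp_restrict_Ioc 2)).mul_left _)
  simp only [F, F', Complex.norm_real, Real.norm_eq_abs, sq_abs, smul_eq_mul] at hsum
  have hba : 0 < (b - a)⁻¹ := inv_pos.mpr (sub_pos.mpr hab)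
  nlinarith

theorem Function.Periodic.deriv {E : Type*} [NormedAddCommGroup E] [NormedSpace ℝ E] {f : ℝ → E}
    {c : ℝ} (h : Periodic f c) : Periodic (deriv f) c := fun x => by
  rw [← deriv_comp_add_const, h.funext]

theorem eq_zero_of_periodic_of_hasDerivAt {u u' g : ℝ → ℝ} (hper : Periodic u (2 * π))
    (hu : ∀ x, HasDerivAt u (u' x) x) (hu' : ∀ x, HasDerivAt u' (g x * u x - u x) x)
    (hg : Continuous g) (hg_pos : ∀ x, 0 < g x) (hmean : ∫ x in 0..2 * π, u x = 0) (x : ℝ) :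
    u x = 0 := by
  have hu_cont : Continuous u := continuous_iff_continuousAt.mpr fun x => (hu x).continuousAt
  have hu'_cont : Continuous u' := continuous_iff_continuousAt.mpr fun x => (hu' x).continuousAt
  have hu'_per : u' (2 * π) = u' 0 := by
    rw [← (hu _).deriv, ← (hu _).deriv, ← zero_add (2 * π), hper.deriv]
  have hint : ∀ v : ℝ → ℝ, Continuous v → IntervalIntegrable v volume 0 (2 * π) :=
    fun v hv => hv.intervalIntegrable _ _
  have hparts : ∫ x in 0..2 * π, g x * u x ^ 2 =
      (∫ x in 0..2 * π, u x ^ 2) - ∫ x in 0..2 * π, u' x ^ 2 := by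
    have h := intervalIntegral.integral_mul_deriv_eq_deriv_mul (fun x _ => hu x) (fun x _ => hu' x)
      (hint _ hu'_cont) (hint _ ((hg.mul hu_cont).sub hu_cont))
    rw [hu'_per, ← zero_add (2 * π), hper 0, zero_add, sub_self, zero_sub] at h
    have hsplit : ∫ x in 0..2 * π, u x * (g x * u x - u x) =
        (∫ x in 0..2 * π, g x * u x ^ 2) - ∫ x in 0..2 * π, u x ^ 2 := by
      rw [← intervalIntegral.integral_sub (hint (fun x => g x * u x ^ 2) (by fun_prop))
        (hint (fun x => u x ^ 2) (by fun_prop))]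
      congr 1 with x
      ring
    simp only [hsplit, ← sq] at h
    linarith
  have hwirtinger := integral_sq_le_of_hasDerivAt two_pi_pos (fun x _ => hu x)
    hu'_cont.continuousOn (by simpa using (hper 0).symm) (by simpa using hmean)
  rw [sub_zero, div_self two_pi_pos.ne', one_pow, one_mul] at hwirtinger
  obtain ⟨y, hy, hxy⟩ := hper.exists_mem_Ico₀ two_pi_pos x
  rw [hxy]
  by_contra hy0
  have hpos : 0 < ∫ x in 0..2 * π, g x * u x ^ 2 :=
    intervalIntegral.integral_pos two_pi_pos (hg.mul (hu_cont.pow 2)).continuousOn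
      (fun x _ => mul_nonneg (hg_pos x).le (sq_nonneg _))
      ⟨y, Ico_subset_Icc_self hy, mul_pos (hg_pos y) (by positivity)⟩
  linarith

noncomputable def horoW (φ : ℝ → ℝ) (θ : ℝ) : ℝ := deriv φ θ ^ 2 / (2 * φ θ) + (φ θ + (φ θ)⁻¹) / 2

noncomputable def horoRhs (p q γ : ℝ) (φ : ℝ → ℝ) (θ : ℝ) : ℝ := γ * φ θ ^ p * horoW φ θ ^ (1 - q)

noncomputable def horoCoeff (p q γ : ℝ) (φ : ℝ → ℝ) (θ : ℝ) : ℝ :=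
  horoRhs p q γ φ θ / φ θ * (1 + p + (1 - q) * horoRhs p q γ φ θ / horoW φ θ)

section

variable {p q γ : ℝ} {φ : ℝ → ℝ} {θ : ℝ}

theorem horoW_pos (h : 0 < φ θ) : 0 < horoW φ θ := by
  unfold horoW
  positivity

theorem continuous_horoW (hφ : Continuous φ) (hφ' : Continuous (deriv φ)) (hpos : ∀ θ, 0 < φ θ) :
    Continuous (horoW φ) :=
  ((hφ'.pow 2).div (continuous_const.mul hφ) fun θ => (mul_pos two_pos (hpos θ)).ne').add
    ((hφ.add (hφ.inv₀ fun θ => (hpos θ).ne')).div_const 2)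

theorem hasDerivAt_horoW (hφ : DifferentiableAt ℝ φ θ) (hφ' : DifferentiableAt ℝ (deriv φ) θ)
    (hφ0 : φ θ ≠ 0) :
    HasDerivAt (horoW φ) (deriv φ θ / φ θ * (deriv (deriv φ) θ - horoW φ θ + φ θ)) θ := by
  have := ((hφ'.hasDerivAt.pow 2).div (hφ.hasDerivAt.const_mul 2)
    (mul_ne_zero two_ne_zero hφ0)).add ((hφ.hasDerivAt.add (hφ.hasDerivAt.inv hφ0)).div_const 2)
  refine this.congr_deriv ?_
  rw [horoW, Pi.pow_apply]
  field_simp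
  ring

theorem horoRhs_pos (hγ : 0 < γ) (h : 0 < φ θ) : 0 < horoRhs p q γ φ θ := by
  have := horoW_pos h
  unfold horoRhs
  positivity

theorem horoCoeff_pos (hp : -1 ≤ p) (hq : q ≤ 1) (hstrict : -1 < p ∨ q < 1) (hγ : 0 < γ)
    (h : 0 < φ θ) : 0 < horoCoeff p q γ φ θ := by
  have hW := horoW_pos h
  have hF := horoRhs_pos (p := p) (q := q) hγ h
  refine mul_pos (div_pos hF h) ?_
  rcases hstrict with hp' | hq'
  · have := div_nonneg (mul_nonneg (sub_nonneg.2 hq) hF.le) hW.le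
    linarith
  · have := div_pos (mul_pos (sub_pos.2 hq') hF) hW
    linarith

namespace IsSolutionQ

theorem pos (h : IsSolutionQ p q γ φ) (θ : ℝ) : 0 < φ θ :=
  h.2.1 θ

theorem periodic (h : IsSolutionQ p q γ φ) : Periodic φ (2 * π) :=
  h.2.2.1

theorem differentiable (h : IsSolutionQ p q γ φ) : Differentiable ℝ φ :=
  h.1.differentiable (by simp)

theorem contDiff_deriv (h : IsSolutionQ p q γ φ) : ContDiff ℝ (⊤ : ℕ∞) (deriv φ) :=
  (contDiff_infty_iff_deriv.mp h.1).2

theorem differentiable_deriv (h : IsSolutionQ p q γ φ) : Differentiable ℝ (deriv φ) :=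
  h.contDiff_deriv.differentiable (by simp)

theorem deriv_deriv_eq (h : IsSolutionQ p q γ φ) (θ : ℝ) :
    deriv (deriv φ) θ = horoRhs p q γ φ θ + horoW φ θ - φ θ := by
  have hφ := h.pos θ
  have hW := horoW_pos hφ
  have hE : φ θ ^ (-p) * horoW φ θ ^ (q - 1) * (deriv (deriv φ) θ - horoW φ θ + φ θ) = γ := by
    rw [← h.2.2.2 θ, horoW]
    ring
  rw [rpow_neg hφ.le, show q - 1 = -(1 - q) by ring, rpow_neg hW.le] at hE
  have := rpow_pos_of_pos hφ p
  have := rpow_pos_of_pos hW (1 - q)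
  field_simp at hE
  rw [horoRhs]
  linear_combination hE

theorem hasDerivAt_horoW (h : IsSolutionQ p q γ φ) (θ : ℝ) :
    HasDerivAt (horoW φ) (deriv φ θ / φ θ * horoRhs p q γ φ θ) θ := by
  convert _root_.hasDerivAt_horoW (h.differentiable θ) (h.differentiable_deriv θ) (h.pos θ).ne'
    using 2
  rw [h.deriv_deriv_eq]
  ring

theorem hasDerivAt_deriv_deriv (h : IsSolutionQ p q γ φ) (θ : ℝ) :
    HasDerivAt (deriv (deriv φ)) (horoCoeff p q γ φ θ * deriv φ θ - deriv φ θ) θ := by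
  have hφ := h.pos θ
  have hW := horoW_pos hφ
  have hφ' := (h.differentiable θ).hasDerivAt
  have hF := ((hφ'.rpow_const (p := p) (Or.inl hφ.ne')).const_mul γ).mul
    ((h.hasDerivAt_horoW θ).rpow_const (p := 1 - q) (Or.inl hW.ne'))
  rw [funext h.deriv_deriv_eq]
  refine ((hF.add (h.hasDerivAt_horoW θ)).sub hφ').congr_deriv ?_
  simp only [horoCoeff, horoRhs, rpow_sub hφ, rpow_sub hW, rpow_one]
  field_simp
  ring

theorem continuous_horoCoeff (h : IsSolutionQ p q γ φ) : Continuous (horoCoeff p q γ φ) := by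
  have hφ := h.1.continuous
  have hpos := h.pos
  have hW := continuous_horoW hφ h.contDiff_deriv.continuous hpos
  have hF : Continuous (horoRhs p q γ φ) :=
    (continuous_const.mul (hφ.rpow_const fun θ => Or.inl (hpos θ).ne')).mul
      (hW.rpow_const fun θ => Or.inl (horoW_pos (hpos θ)).ne')
  exact (hF.div hφ fun θ => (hpos θ).ne').mul
    (continuous_const.add ((continuous_const.mul hF).div hW fun θ => (horoW_pos (hpos θ)).ne'))

end IsSolutionQ
end

theorem stmt_3 (p q γ : ℝ) (hp : -1 ≤ p) (hq : q ≤ 1) (hstrict : -1 < p ∨ q < 1)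
    (hγ : 0 < γ) (φ : ℝ → ℝ) (hφ : IsSolutionQ p q γ φ) :
    ∃ c : ℝ, 0 < c ∧
      c ^ (-p) * ((c + c⁻¹) / 2) ^ (q - 1) * ((c - c⁻¹) / 2) = γ ∧
      ∀ θ, φ θ = c := by
  have hmean : ∫ θ in 0..2 * π, deriv φ θ = 0 := by
    rw [intervalIntegral.integral_deriv_eq_sub (fun θ _ => hφ.differentiable θ)
      (hφ.contDiff_deriv.continuous.intervalIntegrable _ _), ← zero_add (2 * π), hφ.periodic, sub_self]
  have hφ' : ∀ θ, deriv φ θ = 0 :=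
    eq_zero_of_periodic_of_hasDerivAt hφ.periodic.deriv (fun θ => (hφ.differentiable_deriv θ).hasDerivAt)
      hφ.hasDerivAt_deriv_deriv hφ.continuous_horoCoeff
      (fun θ => horoCoeff_pos hp hq hstrict hγ (hφ.pos θ)) hmean
  have hφ'' : deriv (deriv φ) 0 = 0 := by simp [funext hφ']
  refine ⟨φ 0, hφ.pos 0, ?_, fun θ => is_const_of_deriv_eq_zero hφ.differentiable hφ' θ 0⟩
  simpa [hφ', hφ''] using hφ.2.2.2 0
end

section
/- Let δ > 0, let u₀ ∈ ℝ, and let f : (u₀ - δ, u₀ + δ) → ℝ be a smooth function with f(u₀) = f'(u₀) = 0 and f''(u₀) = -2a < 0. Suppose u₁, u₂ are functions defined for all sufficiently small c > 0 with u₁(c) < u₀ < u₂(c), f(u₁(c)) + c = 0 = f(u₂(c)) + c, and f(u) + c > 0 for u ∈ (u₁(c), u₂(c)). Then lim_{c → 0⁺} ∫_{u₁(c)}^{u₂(c)} du / √(f(u) + c) = π / √a. -/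
/-!
Near `u₀` the second derivative of `f` lies between `-2(a + e)` and `-2(a - e)`. For small `c` the
roots `r = u₁ c`, `q = u₂ c` lie in that neighbourhood, and since `f + c` vanishes at both ends,
concavity of `f u + (a - e) (u - r) (u - q)` and convexity of `f u + (a + e) (u - r) (u - q)` pinch
`f u + c` between `(a - e) (q - u) (u - r)` and `(a + e) (q - u) (u - r)`. The comparison integrals
are arcsines, `∫ r..q (A (q - u) (u - r))^(-1/2) du = π / √A`, so the integral lies between
`π / √(a + e)` and `π / √(a - e)`; let `e → 0`.
-/

open Real Filter Set MeasureTheory intervalIntegral Topology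

lemma concaveOn_add_mul_sub_mul_sub {D : Set ℝ} (hD : Convex ℝ D) {f f' f'' : ℝ → ℝ} {A : ℝ}
    (hf : ContinuousOn f D) (hf' : ∀ x ∈ interior D, HasDerivAt f (f' x) x)
    (hf'' : ∀ x ∈ interior D, HasDerivAt f' (f'' x) x)
    (hA : ∀ x ∈ interior D, f'' x ≤ -(2 * A)) (p q : ℝ) :
    ConcaveOn ℝ D (fun x => f x + A * ((x - p) * (x - q))) := by
  have hquad' (x : ℝ) : HasDerivAt (fun x => A * ((x - p) * (x - q))) (A * (2 * x - p - q)) x :=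
    ((((hasDerivAt_id' x).sub_const p).mul
      ((hasDerivAt_id' x).sub_const q)).const_mul A).congr_deriv (by ring)
  have hquad'' (x : ℝ) : HasDerivAt (fun x => A * (2 * x - p - q)) (2 * A) x :=
    (((((hasDerivAt_id' x).const_mul 2).sub_const p).sub_const q).const_mul A).congr_deriv
      (by ring)
  refine concaveOn_of_hasDerivWithinAt2_nonpos hD (hf.add (by fun_prop))
    (fun x hx => ((hf' x hx).add (hquad' x)).hasDerivWithinAt)
    (fun x hx => ((hf'' x hx).add (hquad'' x)).hasDerivWithinAt)
    (fun x hx => by linarith [hA x hx])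

lemma mul_sub_mul_sub_le_of_deriv2_le {f f' f'' : ℝ → ℝ} {r q A : ℝ}
    (hf : ContinuousOn f (Icc r q)) (hf' : ∀ x ∈ Ioo r q, HasDerivAt f (f' x) x)
    (hf'' : ∀ x ∈ Ioo r q, HasDerivAt f' (f'' x) x) (hA : ∀ x ∈ Ioo r q, f'' x ≤ -(2 * A))
    (hr : f r = 0) (hq : f q = 0) {u : ℝ} (hu : u ∈ Icc r q) :
    A * ((q - u) * (u - r)) ≤ f u := by
  rw [← interior_Icc] at hf' hf'' hA
  have hrq : r ≤ q := hu.1.trans hu.2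
  have := (concaveOn_add_mul_sub_mul_sub (convex_Icc r q) hf hf' hf'' hA r q).ge_on_segment
    (left_mem_Icc.2 hrq) (right_mem_Icc.2 hrq) (by rwa [segment_eq_Icc hrq])
  simp only [hr, hq, sub_self, zero_mul, mul_zero, add_zero, min_self] at this
  linear_combination this

lemma le_mul_sub_mul_sub_of_le_deriv2 {f f' f'' : ℝ → ℝ} {r q A : ℝ}
    (hf : ContinuousOn f (Icc r q)) (hf' : ∀ x ∈ Ioo r q, HasDerivAt f (f' x) x)
    (hf'' : ∀ x ∈ Ioo r q, HasDerivAt f' (f'' x) x) (hA : ∀ x ∈ Ioo r q, -(2 * A) ≤ f'' x)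
    (hr : f r = 0) (hq : f q = 0) {u : ℝ} (hu : u ∈ Icc r q) :
    f u ≤ A * ((q - u) * (u - r)) := by
  have := mul_sub_mul_sub_le_of_deriv2_le (f := -f) (f' := -f') (f'' := -f'') (A := -A) hf.neg
    (fun x hx => (hf' x hx).neg) (fun x hx => (hf'' x hx).neg)
    (fun x hx => by simp only [Pi.neg_apply]; linarith [hA x hx])
    (by simp [hr]) (by simp [hq]) hu
  simp only [Pi.neg_apply] at this
  linarith

lemma le_neg_mul_sq_of_deriv2_le {f f' f'' : ℝ → ℝ} {α β x₀ A : ℝ}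
    (hf' : ∀ x ∈ Icc α β, HasDerivAt f (f' x) x) (hf'' : ∀ x ∈ Ioo α β, HasDerivAt f' (f'' x) x)
    (hA : ∀ x ∈ Ioo α β, f'' x ≤ -(2 * A)) (hx₀ : x₀ ∈ Icc α β) (hf₀ : f x₀ = 0)
    (hf₁ : f' x₀ = 0) {x : ℝ} (hx : x ∈ Icc α β) :
    f x ≤ -(A * (x - x₀) ^ 2) := by
  set g := fun x => f x + A * ((x - x₀) * (x - x₀))
  rw [← interior_Icc] at hf'' hA
  have hg : ConcaveOn ℝ (Icc α β) g := concaveOn_add_mul_sub_mul_sub (convex_Icc α β)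
    (fun x hx => (hf' x hx).continuousAt.continuousWithinAt)
    (fun x hx => hf' x (interior_subset hx)) hf'' hA x₀ x₀
  have hg' : HasDerivAt g 0 x₀ := by
    refine ((hf' x₀ hx₀).add ((((hasDerivAt_id' x₀).sub_const x₀).mul
      ((hasDerivAt_id' x₀).sub_const x₀)).const_mul A)).congr_deriv ?_
    simp [hf₁]
  suffices g x ≤ g x₀ by simp only [g, hf₀] at this; nlinarith
  rcases lt_trichotomy x x₀ with hlt | rfl | hgt
  · have := hg.le_slope_of_hasDerivAt hx hx₀ hlt hg'
    rw [slope_def_field, div_nonneg_iff] at this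
    rcases this with ⟨h, _⟩ | ⟨_, h⟩ <;> linarith
  · exact le_rfl
  · have := hg.slope_le_of_hasDerivAt hx₀ hx hgt hg'
    rw [slope_def_field, div_nonpos_iff] at this
    rcases this with ⟨_, h⟩ | ⟨h, _⟩ <;> linarith

lemma hasDerivAt_arcsin_div_sqrt {p q A u : ℝ} (hA : 0 < A) (hu : u ∈ Ioo p q) :
    HasDerivAt (fun v => arcsin ((2 * v - p - q) / (q - p)) / √A)
      (√(A * ((q - u) * (u - p))))⁻¹ u := by
  obtain ⟨hpu, huq⟩ := hu
  have hqp : 0 < q - p := by linarith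
  set x := (2 * u - p - q) / (q - p)
  have hx : 1 - x ^ 2 = (2 / (q - p)) ^ 2 * ((q - u) * (u - p)) := by
    simp only [x]; field_simp; ring
  have hx₁ : 0 < 1 - x ^ 2 := by
    rw [hx]; have := mul_pos (sub_pos.2 huq) (sub_pos.2 hpu); positivity
  have hlin : HasDerivAt (fun v => (2 * v - p - q) / (q - p)) (2 / (q - p)) u := by
    simpa using ((((hasDerivAt_id u).const_mul 2).sub_const p).sub_const q).div_const (q - p)
  have := ((hasDerivAt_arcsin (x := x) (by nlinarith) (by nlinarith)).comp u hlin).div_const √A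
  refine this.congr_deriv ?_
  rw [hx, sqrt_mul (by positivity), sqrt_sq (by positivity), sqrt_mul hA.le]
  field_simp

lemma intervalIntegrable_inv_sqrt_mul_sub_mul_sub {p q A : ℝ} (hpq : p < q) (hA : 0 < A) :
    IntervalIntegrable (fun u => (√(A * ((q - u) * (u - p))))⁻¹) volume p q :=
  intervalIntegrable_deriv_of_nonneg (g := fun v => arcsin ((2 * v - p - q) / (q - p)) / √A)
    (by fun_prop)
    (by simpa [hpq.le] using fun u hu => hasDerivAt_arcsin_div_sqrt hA hu)
    (fun _ _ => by positivity)

lemma integral_inv_sqrt_mul_sub_mul_sub {p q A : ℝ} (hpq : p < q) (hA : 0 < A) :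
    ∫ u in p..q, (√(A * ((q - u) * (u - p))))⁻¹ = π / √A := by
  have hqp : q - p ≠ 0 := by linarith
  rw [integral_eq_sub_of_hasDerivAt_of_le hpq.le
    (f := fun v => arcsin ((2 * v - p - q) / (q - p)) / √A) (by fun_prop)
    (fun u hu => hasDerivAt_arcsin_div_sqrt hA hu)
    (intervalIntegrable_inv_sqrt_mul_sub_mul_sub hpq hA)]
  rw [show (2 * q - p - q) / (q - p) = 1 by field_simp; ring,
    show (2 * p - p - q) / (q - p) = -1 by field_simp; ring, arcsin_one, arcsin_neg_one]
  ring

lemma integral_inv_sqrt_mem_Icc_of_mul_sub_mul_sub_le {g : ℝ → ℝ} {r q Am Ap : ℝ} (hrq : r < q)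
    (hAm : 0 < Am) (hAp : 0 < Ap) (hg : ContinuousOn g (Icc r q))
    (hlow : ∀ u ∈ Ioo r q, Am * ((q - u) * (u - r)) ≤ g u)
    (hup : ∀ u ∈ Ioo r q, g u ≤ Ap * ((q - u) * (u - r))) :
    π / √Ap ≤ ∫ u in r..q, (√(g u))⁻¹ ∧ ∫ u in r..q, (√(g u))⁻¹ ≤ π / √Am := by
  have hmodel_pos : ∀ A, 0 < A → ∀ u ∈ Ioo r q, 0 < A * ((q - u) * (u - r)) :=
    fun A hA u hu => mul_pos hA (mul_pos (sub_pos.2 hu.2) (sub_pos.2 hu.1))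
  have hle_Am : ∀ u ∈ Ioo r q, (√(g u))⁻¹ ≤ (√(Am * ((q - u) * (u - r))))⁻¹ :=
    fun u hu => inv_anti₀ (sqrt_pos.2 (hmodel_pos Am hAm u hu)) (sqrt_le_sqrt (hlow u hu))
  have hge_Ap : ∀ u ∈ Ioo r q, (√(Ap * ((q - u) * (u - r))))⁻¹ ≤ (√(g u))⁻¹ :=
    fun u hu => inv_anti₀ (sqrt_pos.2 ((hmodel_pos Am hAm u hu).trans_le (hlow u hu)))
      (sqrt_le_sqrt (hup u hu))
  have hint : IntervalIntegrable (fun u => (√(g u))⁻¹) volume r q := by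
    rw [intervalIntegrable_iff_integrableOn_Ioo_of_le hrq.le]
    refine ((intervalIntegrable_iff_integrableOn_Ioo_of_le hrq.le).1
      (intervalIntegrable_inv_sqrt_mul_sub_mul_sub hrq hAm)).mono' ?_
      ((ae_restrict_iff' measurableSet_Ioo).2 (Eventually.of_forall fun u hu => ?_))
    · refine ContinuousOn.aestronglyMeasurable ?_ measurableSet_Ioo
      exact ((hg.mono Ioo_subset_Icc_self).sqrt).inv₀ fun u hu =>
        (sqrt_pos.2 ((hmodel_pos Am hAm u hu).trans_le (hlow u hu))).ne'
    · rw [norm_of_nonneg (by positivity)]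
      exact hle_Am u hu
  constructor
  · rw [← integral_inv_sqrt_mul_sub_mul_sub hrq hAp]
    exact integral_mono_on_of_le_Ioo hrq.le
      (intervalIntegrable_inv_sqrt_mul_sub_mul_sub hrq hAp) hint hge_Ap
  · rw [← integral_inv_sqrt_mul_sub_mul_sub hrq hAm]
    exact integral_mono_on_of_le_Ioo hrq.le hint
      (intervalIntegrable_inv_sqrt_mul_sub_mul_sub hrq hAm) hle_Am

lemma Filter.Tendsto.of_eventually_mem_Icc {α β : Type*} {l : Filter α} {l' : Filter β}
    [l'.NeBot] {F : α → ℝ} {g h : β → ℝ} {L : ℝ} (hg : Tendsto g l' (𝓝 L)) (hh : Tendsto h l' (𝓝 L))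
    (H : ∀ᶠ e in l', ∀ᶠ x in l, g e ≤ F x ∧ F x ≤ h e) : Tendsto F l (𝓝 L) := by
  refine tendsto_order.2 ⟨fun b hb => ?_, fun b hb => ?_⟩
  · obtain ⟨e, he, hbe⟩ := (H.and (hg.eventually (lt_mem_nhds hb))).exists
    exact he.mono fun x hx => hbe.trans_le hx.1
  · obtain ⟨e, he, hbe⟩ := (H.and (hh.eventually (gt_mem_nhds hb))).exists
    exact he.mono fun x hx => hx.2.trans_lt hbe

lemma Icc_subset_Icc_of_pos_on_Ioo {g : ℝ → ℝ} {r q α β : ℝ} (hαq : α < q) (hrβ : r < β)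
    (hα : g α < 0) (hβ : g β < 0) (hpos : ∀ u, r < u → u < q → 0 < g u) :
    Icc r q ⊆ Icc α β :=
  Icc_subset_Icc (not_lt.1 fun h => (hpos α h hαq).not_gt hα)
    (not_lt.1 fun h => (hpos β hrβ h).not_gt hβ)

lemma eventually_integral_inv_sqrt_mem_Icc {f f' f'' u₁ u₂ : ℝ → ℝ} {u₀ α β Am Ap c₀ : ℝ}
    (hα : α < u₀) (hβ : u₀ < β) (hAm : 0 < Am) (hAp : 0 < Ap)
    (hf' : ∀ x ∈ Icc α β, HasDerivAt f (f' x) x) (hf'' : ∀ x ∈ Icc α β, HasDerivAt f' (f'' x) x)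
    (hf''_bounds : ∀ x ∈ Icc α β, -(2 * Ap) ≤ f'' x ∧ f'' x ≤ -(2 * Am))
    (hf₀ : f u₀ = 0) (hf₁ : f' u₀ = 0) (hc₀ : 0 < c₀)
    (h : ∀ c, 0 < c → c < c₀ → u₁ c < u₀ ∧ u₀ < u₂ c ∧ f (u₁ c) + c = 0 ∧ f (u₂ c) + c = 0 ∧
      ∀ u, u₁ c < u → u < u₂ c → 0 < f u + c) :
    ∀ᶠ c in 𝓝[>] 0, π / √Ap ≤ ∫ u in u₁ c..u₂ c, (√(f u + c))⁻¹ ∧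
      ∫ u in u₁ c..u₂ c, (√(f u + c))⁻¹ ≤ π / √Am := by
  have hu₀ : u₀ ∈ Icc α β := ⟨hα.le, hβ.le⟩
  have hneg {x : ℝ} (hx : x ∈ Icc α β) (hxu₀ : x ≠ u₀) : f x < 0 := by
    have := le_neg_mul_sq_of_deriv2_le hf' (fun x hx => hf'' x (Ioo_subset_Icc_self hx))
      (fun x hx => (hf''_bounds x (Ioo_subset_Icc_self hx)).2) hu₀ hf₀ hf₁ hx
    have : 0 < Am * (x - u₀) ^ 2 := by have := sub_ne_zero.2 hxu₀; positivity
    linarith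
  -- `f < 0` at `α` and `β`, so for `c < -f α, -f β` the roots of `f + c` are trapped in `[α, β]`
  have hfα := hneg (left_mem_Icc.2 (hα.trans hβ).le) hα.ne
  have hfβ := hneg (right_mem_Icc.2 (hα.trans hβ).le) hβ.ne'
  filter_upwards [Ioo_mem_nhdsGT (lt_min hc₀ (lt_min (neg_pos.2 hfα) (neg_pos.2 hfβ)))]
    with c ⟨hc, hcmin⟩
  simp only [lt_min_iff] at hcmin
  obtain ⟨hr, hq, hfr, hfq, hpos⟩ := h c hc hcmin.1
  have hsub : Icc (u₁ c) (u₂ c) ⊆ Icc α β :=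
    Icc_subset_Icc_of_pos_on_Ioo (g := fun u => f u + c) (hα.trans hq) (hr.trans hβ)
      (by linarith) (by linarith) hpos
  have hsub' : Ioo (u₁ c) (u₂ c) ⊆ Icc α β := Ioo_subset_Icc_self.trans hsub
  have hg' : ∀ x ∈ Ioo (u₁ c) (u₂ c), HasDerivAt (fun u => f u + c) (f' x) x :=
    fun x hx => (hf' x (hsub' hx)).add_const c
  have hg'' : ∀ x ∈ Ioo (u₁ c) (u₂ c), HasDerivAt f' (f'' x) x := fun x hx => hf'' x (hsub' hx)
  have hg : ContinuousOn (fun u => f u + c) (Icc (u₁ c) (u₂ c)) :=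
    fun x hx => ((hf' x (hsub hx)).continuousAt.add continuousAt_const).continuousWithinAt
  exact integral_inv_sqrt_mem_Icc_of_mul_sub_mul_sub_le (hr.trans hq) hAm hAp hg
    (fun u hu => mul_sub_mul_sub_le_of_deriv2_le hg hg' hg''
      (fun x hx => (hf''_bounds x (hsub' hx)).2) hfr hfq (Ioo_subset_Icc_self hu))
    (fun u hu => le_mul_sub_mul_sub_of_le_deriv2 hg hg' hg''
      (fun x hx => (hf''_bounds x (hsub' hx)).1) hfr hfq (Ioo_subset_Icc_self hu))

theorem stmt_8 (δ u₀ a : ℝ) (hδ : 0 < δ) (ha : 0 < a) (f : ℝ → ℝ)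
    (hf : ContDiffOn ℝ (⊤ : ℕ∞) f (Set.Ioo (u₀ - δ) (u₀ + δ)))
    (hf₀ : f u₀ = 0) (hf₁ : deriv f u₀ = 0) (hf₂ : deriv (deriv f) u₀ = -2 * a)
    (u₁ u₂ : ℝ → ℝ) (c₀ : ℝ) (hc₀ : 0 < c₀)
    (h : ∀ c : ℝ, 0 < c → c < c₀ →
      u₀ - δ < u₁ c ∧ u₁ c < u₀ ∧ u₀ < u₂ c ∧ u₂ c < u₀ + δ ∧
      f (u₁ c) + c = 0 ∧ f (u₂ c) + c = 0 ∧
      ∀ u : ℝ, u₁ c < u → u < u₂ c → 0 < f u + c) :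
    Tendsto (fun c : ℝ => ∫ u in (u₁ c)..(u₂ c), (Real.sqrt (f u + c))⁻¹)
      (nhdsWithin 0 (Set.Ioi 0)) (nhds (π / Real.sqrt a)) := by
  set s := Ioo (u₀ - δ) (u₀ + δ)
  have hu₀ : u₀ ∈ s := ⟨by linarith, by linarith⟩
  have hf' : ContDiffOn ℝ (⊤ : ℕ∞) (deriv f) s :=
    hf.deriv_of_isOpen isOpen_Ioo (by exact_mod_cast le_top)
  have hf'' : ContDiffOn ℝ (⊤ : ℕ∞) (deriv (deriv f)) s :=
    hf'.deriv_of_isOpen isOpen_Ioo (by exact_mod_cast le_top)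
  have hasDerivAt_deriv {g : ℝ → ℝ} (hg : ContDiffOn ℝ (⊤ : ℕ∞) g s) {x : ℝ} (hx : x ∈ s) :
      HasDerivAt g (deriv g x) x :=
    ((hg.differentiableOn (by simp)) x hx).differentiableAt (isOpen_Ioo.mem_nhds hx) |>.hasDerivAt
  have hlim (k : ℝ) : Tendsto (fun e => π / √(a + k * e)) (𝓝[>] 0) (𝓝 (π / √a)) := by
    have : ContinuousAt (fun e => π / √(a + k * e)) 0 :=
      continuousAt_const.div (by fun_prop) (by simpa using (sqrt_pos.2 ha).ne')
    simpa using this.tendsto.mono_left nhdsWithin_le_nhds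
  refine (hlim 1).of_eventually_mem_Icc (hlim (-1)) ?_
  filter_upwards [Ioo_mem_nhdsGT ha] with e ⟨he, hea⟩
  have hnear : ∀ᶠ x in 𝓝 u₀,
      x ∈ s ∧ deriv (deriv f) x ∈ Icc (-(2 * (a + e))) (-(2 * (a - e))) :=
    (isOpen_Ioo.eventually_mem hu₀).and
      ((hf''.continuousOn.continuousAt (isOpen_Ioo.mem_nhds hu₀)).eventually
      (Icc_mem_nhds (by linarith) (by linarith)))
  obtain ⟨η, hη, hsub⟩ := (nhds_basis_Icc_pos u₀).mem_iff.1 hnear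
  simp only [one_mul, neg_one_mul, ← sub_eq_add_neg]
  exact eventually_integral_inv_sqrt_mem_Icc (by linarith) (by linarith) (by linarith)
    (by linarith) (fun x hx => hasDerivAt_deriv hf (hsub hx).1)
    (fun x hx => hasDerivAt_deriv hf' (hsub hx).1)
    (fun x hx => (hsub hx).2) hf₀ hf₁ hc₀
    fun c hc hcc₀ =>
      let ⟨_, hr, hq, _, hfr, hfq, hpos⟩ := h c hc hcc₀
      ⟨hr, hq, hfr, hfq, hpos⟩
end

section
/- Fix real numbers s and r with 1 < s < r. Then the function H(p) = (s^{2p} - 1)/(r^{2p} - 1) is strictly decreasing in p on (-∞, 0): for all p₁ < p₂ < 0, one has H(p₁) > H(p₂). -/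
/-!
Write `s = r ^ c` with `c = logb r s ∈ (0, 1)` and `u = r ^ (2 p)`, which increases from `0` to `1`
as `p` runs over `(-∞, 0)`. Then `s ^ (2 p) = u ^ c`, so `H(p) = (u ^ c - 1) / (u - 1)` is the slope
of the secant of the strictly concave function `u ↦ u ^ c` between `u` and `1`, which strictly
decreases as `u` increases.
-/

open Real

lemma rpow_sub_one_div_sub_one_lt_of_lt {c x y : ℝ} (hc₀ : 0 < c) (hc₁ : c < 1) (hx : 0 ≤ x)
    (hx₁ : x ≠ 1) (hy₁ : y ≠ 1) (hxy : x < y) :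
    (y ^ c - 1) / (y - 1) < (x ^ c - 1) / (x - 1) := by
  simpa only [one_rpow] using (strictConcaveOn_rpow hc₀ hc₁).secant_strict_mono
    (a := 1) (Set.mem_Ici.2 zero_le_one) hx (Set.mem_Ici.2 (hx.trans hxy.le)) hx₁ hy₁ hxy

lemma rpow_eq_rpow_rpow_logb {r s : ℝ} (hr : 0 < r) (hr₁ : r ≠ 1) (hs : 0 < s) (q : ℝ) :
    s ^ q = (r ^ q) ^ logb r s := by
  rw [← rpow_mul hr.le, mul_comm, rpow_mul hr.le, rpow_logb hr hr₁ hs]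

theorem stmt_13 (s r : ℝ) (hs : 1 < s) (hsr : s < r) (p₁ p₂ : ℝ)
    (h₁₂ : p₁ < p₂) (h₂ : p₂ < 0) :
    (s ^ (2 * p₂) - 1) / (r ^ (2 * p₂) - 1) <
      (s ^ (2 * p₁) - 1) / (r ^ (2 * p₁) - 1) := by
  have hr : 1 < r := hs.trans hsr
  have hc₀ : 0 < logb r s := logb_pos hr hs
  have hc₁ : logb r s < 1 := by
    simpa only [logb_self_eq_one hr] using logb_lt_logb hr (by linarith) hsr
  rw [rpow_eq_rpow_rpow_logb (by linarith) hr.ne' (by linarith) (2 * p₁),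
    rpow_eq_rpow_rpow_logb (by linarith) hr.ne' (by linarith) (2 * p₂)]
  exact rpow_sub_one_div_sub_one_lt_of_lt hc₀ hc₁ (rpow_nonneg (by linarith) _)
    (rpow_lt_one_of_one_lt_of_neg hr (by linarith)).ne
    (rpow_lt_one_of_one_lt_of_neg hr (by linarith)).ne
    (rpow_lt_rpow_of_exponent_lt hr (by linarith))
end
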